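/- Let 2 ≤ p < q < s, K ≥ 2, Λ > 0, and λ_z, λ_{z̃} > 1, a(z), a(z̃), b(z), b(z̃) ≥ 0 with Λ = λ_z^p + a(z)λ_z^q + b(z)λ_z^s = λ_{z̃}^p + a(z̃)λ_{z̃}^q + b(z̃)λ_{z̃}^s. Assume K²λ_z^p < a(z)λ_z^q, K²λ_z^p ≥ b(z)λ_z^s, a(z)/2 ≤ a(z̃) ≤ 2a(z), and b(z) ≤ b(z̃) + (K²−1)λ_z^{p−s}. Then λ_z ≥ K^{−2/p} λ_{z̃}. -/

import Mathlib

/-!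
Suppose `λ_z < μ := K^{-2/p} λ_{z̃}`. The Hölder-type bound turns `b(z) λ_z^s` into
`b(z̃) λ_z^s + (K² - 1) λ_z^p`, so `Λ ≤ K² λ_z^p + a(z) λ_z^q + b(z̃) λ_z^s`. Each term is then
beaten by the corresponding term at `z̃`: `K² λ_z^p < K² μ^p = λ_{z̃}^p`,
`a(z) λ_z^q ≤ 2 a(z̃) K^{-2q/p} λ_{z̃}^q ≤ a(z̃) λ_{z̃}^q` since `K^{2q/p} ≥ K ≥ 2`, and
`λ_z < μ ≤ λ_{z̃}` handles the `b(z̃)` term. Hence `Λ < Λ`.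
-/

open Real

lemma rpow_neg_mul_rpow {K t : ℝ} (hK : 0 ≤ K) (ht : 0 ≤ t) (c r : ℝ) :
    (K ^ (-c) * t) ^ r = K ^ (-(c * r)) * t ^ r := by
  rw [mul_rpow (rpow_nonneg hK _) ht, ← rpow_mul hK, neg_mul]

lemma sq_mul_rpow_neg_two_div_mul_rpow {K t p : ℝ} (hK : 0 < K) (ht : 0 ≤ t) (hp : p ≠ 0) :
    K ^ 2 * (K ^ (-(2 / p)) * t) ^ p = t ^ p := by
  rw [rpow_neg_mul_rpow hK.le ht, div_mul_cancel₀ _ hp, rpow_neg hK.le, ← mul_assoc]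
  norm_cast
  rw [mul_inv_cancel₀ (by positivity), one_mul]

lemma two_mul_rpow_neg_le_one {K e : ℝ} (hK : 2 ≤ K) (he : 1 ≤ e) : 2 * K ^ (-e) ≤ 1 := by
  have hK₀ : 0 < K := by linarith
  calc 2 * K ^ (-e) ≤ 2 * K ^ (-1 : ℝ) := by gcongr; linarith
    _ ≤ 1 := by
      rw [rpow_neg_one, ← div_eq_mul_inv, div_le_one hK₀]
      exact hK

lemma two_mul_rpow_neg_two_div_mul_rpow_le {K t p q : ℝ} (hK : 2 ≤ K) (ht : 0 ≤ t) (hp : 0 < p)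
    (hpq : p ≤ 2 * q) : 2 * (K ^ (-(2 / p)) * t) ^ q ≤ t ^ q := by
  rw [rpow_neg_mul_rpow (by linarith) ht, ← mul_assoc]
  refine mul_le_of_le_one_left (rpow_nonneg ht _) (two_mul_rpow_neg_le_one hK ?_)
  rw [div_mul_eq_mul_div, le_div_iff₀ hp]
  linarith

lemma mul_rpow_le_of_le_add_mul_rpow_sub {b b' c t p s : ℝ} (ht : 0 < t)
    (h : b ≤ b' + c * t ^ (p - s)) : b * t ^ s ≤ b' * t ^ s + c * t ^ p := by
  calc b * t ^ s ≤ (b' + c * t ^ (p - s)) * t ^ s := by gcongr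
    _ = b' * t ^ s + c * t ^ p := by rw [add_mul, mul_assoc, ← rpow_add ht, sub_add_cancel]

theorem stmt_3_general (p q s K Λ az azt bz bzt lz lzt : ℝ)
    (h2p : 2 ≤ p) (hpq : p < q) (hqs : q < s) (hK : 2 ≤ K)
    (hlz : 1 < lz) (hlzt : 1 < lzt)
    (haz : 0 ≤ az) (hazt : 0 ≤ azt) (hbzt : 0 ≤ bzt)
    (hz : Λ = lz ^ p + az * lz ^ q + bz * lz ^ s)
    (hzt : Λ = lzt ^ p + azt * lzt ^ q + bzt * lzt ^ s)
    (ha1 : az / 2 ≤ azt)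
    (hhold : bz ≤ bzt + (K ^ 2 - 1) * lz ^ (p - s)) :
    K ^ (-(2 / p)) * lzt ≤ lz := by
  by_contra! hμ
  set μ := K ^ (-(2 / p)) * lzt
  have hlz₀ : 0 < lz := by linarith
  have hlzt₀ : 0 ≤ lzt := by linarith
  have hμ_le : μ ≤ lzt :=
    mul_le_of_le_one_left hlzt₀ <| rpow_le_one_of_one_le_of_nonpos (by linarith) <|
      neg_nonpos.2 (div_nonneg zero_le_two (by linarith))
  have hb := mul_rpow_le_of_le_add_mul_rpow_sub hlz₀ hhold
  have hp_term : K ^ 2 * lz ^ p < lzt ^ p := by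
    rw [← sq_mul_rpow_neg_two_div_mul_rpow (K := K) (by linarith) hlzt₀ (by linarith : p ≠ 0)]
    gcongr
  have hq_term : az * lz ^ q ≤ azt * lzt ^ q :=
    calc az * lz ^ q ≤ az * μ ^ q := by gcongr; linarith
      _ ≤ azt * (2 * μ ^ q) := by
        rw [← mul_assoc, mul_comm azt]
        gcongr
        linarith
      _ ≤ azt * lzt ^ q := by
        gcongr
        exact two_mul_rpow_neg_two_div_mul_rpow_le hK hlzt₀ (by linarith) (by linarith)
  have hs_term : bzt * lz ^ s ≤ bzt * lzt ^ s := by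
    gcongr
    · linarith
    · exact hμ.le.trans hμ_le
  linarith

/-- Algebraic core of Lemma 2.5: in the (p,q)-phase, with comparability of `a` and a
Hölder-type bound on `b`, one has `λ_z ≥ K^{-2/p} λ_{z̃}`. -/
theorem stmt_3 (p q s K Λ az azt bz bzt lz lzt : ℝ)
    (h2p : 2 ≤ p) (hpq : p < q) (hqs : q < s) (hK : 2 ≤ K) (hΛ : 0 < Λ)
    (hlz : 1 < lz) (hlzt : 1 < lzt)
    (haz : 0 ≤ az) (hazt : 0 ≤ azt) (hbz : 0 ≤ bz) (hbzt : 0 ≤ bzt)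
    (hz : Λ = lz ^ p + az * lz ^ q + bz * lz ^ s)
    (hzt : Λ = lzt ^ p + azt * lzt ^ q + bzt * lzt ^ s)
    (hphase1 : K ^ 2 * lz ^ p < az * lz ^ q)
    (hphase2 : bz * lz ^ s ≤ K ^ 2 * lz ^ p)
    (ha1 : az / 2 ≤ azt) (ha2 : azt ≤ 2 * az)
    (hhold : bz ≤ bzt + (K ^ 2 - 1) * lz ^ (p - s)) :
    K ^ (-(2 / p)) * lzt ≤ lz :=
  stmt_3_general p q s K Λ az azt bz bzt lz lzt h2p hpq hqs hK hlz hlzt haz hazt hbzt hz hzt ha1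
    hhold
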